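/- arXiv:1702.02185 — 2 statements merged into one kernel-verified Lean document; each statement's English description precedes it below -/
import Mathlib

section
/- The weak ideal topology j^I is idempotent (j^I ∘ j^I = j^I as natural endomorphisms of Ω) if and only if the ideal I is idempotent, i.e., I²(C) = I(C) for every object C. -/
open CategoryTheory Opposite CategoryTheory.GrothendieckTopology

universe v u

variable {C : Type u} [Category.{v} C]

/-- An ideal of the presheaf category on `C`: a family of sieves `I(X)` such that
`f ∘ g ∈ I(D)` whenever `f : X ⟶ D` and `g ∈ I(X)`. -/
structure CIdeal (C : Type u) [Category.{v} C] where
  sieve : ∀ X : C, Sieve X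
  comp : ∀ ⦃X D : C⦄ (f : X ⟶ D) ⦃Y : C⦄ (g : Y ⟶ X), sieve X g → sieve D (g ≫ f)

/-- `I²(X) = { f ∘ g | f ∈ I(X), g ∈ I(dom f) }`. -/
def CIdeal.sq (I : CIdeal C) (X : C) : ∀ ⦃Y : C⦄, (Y ⟶ X) → Prop :=
  fun _Y h => ∃ (Z : C) (f : Z ⟶ X) (g : _Y ⟶ Z), I.sieve X f ∧ I.sieve Z g ∧ h = g ≫ f

/-- The `I`-closure of a family of subsets of the values of a presheaf `F`. -/
def CIdeal.cl (I : CIdeal C) (F : Cᵒᵖ ⥤ Type v)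
    (G : ∀ X : C, Set (F.obj (op X))) (X : C) : Set (F.obj (op X)) :=
  {x | ∀ ⦃Y : C⦄ (f : Y ⟶ X), I.sieve X f → F.map f.op x ∈ G Y}

/-- The weak ideal topology: `jᴵ(S) = { f | ∀ g ∈ I(dom f), f ∘ g ∈ S }`. -/
def CIdeal.jI (I : CIdeal C) {X : C} (S : Sieve X) : Sieve X where
  arrows := fun _Y f => ∀ ⦃Z : C⦄ (g : Z ⟶ _Y), I.sieve _Y g → S (g ≫ f)
  downward_closed := by
    intro Y Z f hf g W k hk
    have := hf (k ≫ g) (I.comp g k hk)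
    simpa [Category.assoc] using this

namespace CIdeal

variable (I : CIdeal C)

lemma sieve_of_sq {X Y : C} {h : Y ⟶ X} (hh : I.sq X h) : I.sieve X h := by
  obtain ⟨Z, f, g, -, hg, rfl⟩ := hh
  exact I.comp f g hg

def sqSieve (X : C) : Sieve X where
  arrows := I.sq X
  downward_closed := by
    rintro Y W _ ⟨Z, f, g, hf, hg, rfl⟩ k
    exact ⟨Z, f, k ≫ g, hf, (I.sieve Z).downward_closed hg k, by simp⟩

lemma le_jI_jI {X : C} (S : Sieve X) : I.jI S ≤ I.jI (I.jI S) := by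
  intro Y f hf Z g _ W k hk
  simpa using hf (k ≫ g) (I.comp g k hk)

lemma jI_jI_le_jI (hI : ∀ (X : C) ⦃Y : C⦄ (h : Y ⟶ X), I.sieve X h → I.sq X h) {X : C}
    (S : Sieve X) : I.jI (I.jI S) ≤ I.jI S := by
  intro Y f hf Z g hg
  obtain ⟨W, g₁, g₂, hg₁, hg₂, rfl⟩ := hI Y g hg
  simpa using hf g₁ hg₁ g₂ hg₂

lemma id_mem_jI_jI_sqSieve (X : C) : I.jI (I.jI (I.sqSieve X)) (𝟙 X) := by
  intro Z g hg W k hk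
  exact ⟨Z, g, k, hg, hk, by simp⟩

/-- `𝟙 X` always lies in `jᴵ(jᴵ(I²(X)))`, and lying in `jᴵ(I²(X))` says exactly
`I(X) ⊆ I²(X)`. -/
lemma sq_of_sieve_of_jI_jI_sqSieve {X : C}
    (hX : I.jI (I.jI (I.sqSieve X)) = I.jI (I.sqSieve X)) {Y : C} {h : Y ⟶ X}
    (hh : I.sieve X h) : I.sq X h := by
  have hid : I.jI (I.sqSieve X) (𝟙 X) := hX ▸ I.id_mem_jI_jI_sqSieve X
  have hh' := hid h hh
  rwa [Category.comp_id] at hh'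

end CIdeal

/-- `jᴵ` is idempotent if and only if the ideal `I` is idempotent,
i.e. `I²(X) = I(X)` for every object `X` (here `I.sq` is `I²`). -/
theorem jI_idempotent_iff (I : CIdeal C) :
    (∀ (X : C) (S : Sieve X), I.jI (I.jI S) = I.jI S)
      ↔ (∀ (X : C) ⦃Y : C⦄ (h : Y ⟶ X), I.sq X h ↔ I.sieve X h) := by
  constructor
  · intro hidem X Y h
    exact ⟨I.sieve_of_sq, I.sq_of_sieve_of_jI_jI_sqSieve (hidem X _)⟩
  · intro hI X S
    exact le_antisymm (I.jI_jI_le_jI (fun X _ h => (hI X h).2) S) (I.le_jI_jI S)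
end

section
/- Let C be a finitely complete small category with admissible class M, and let F = {f_C : D_C → C} be a family of morphisms indexed by objects of C satisfying: for every g : C → D and every sieve S on D, {h | f_C × h ∈ g*(S)} = {h | f_D × (g∘h) ∈ S}. Then the map α_F : Ω → Ω defined by (α_F)_C(S) = {h | f_C × h ∈ S} is a natural transformation that preserves the maximal sieve, commutes with binary intersections of sieves, and is M-action preserving: (α_F)_C(S·m) = (α_F)_C(S)·m for all m ∈ M/C. Furthermore, if each f_C is idempotent in the slice C/C (f_C × f_C = f_C), then α_F is idempotent, hence a Lawvere–Tierney topology. -/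
/-!
Sieves are downward closed, so whether `S` contains `m × h` only depends on `m × h` up to
factorisation both ways over the base. Both `m × (n × h)` and `n × (m × h)` are the triple
pullback of `m`, `n`, `h`, which makes the actions of `m` and `n` commute; and `m × (m × h)`
factors through `m × h` and back through the diagonal, which makes every action idempotent.
Top and intersections are preserved pointwise, and naturality is exactly the compatibility
condition on `F`.
-/

open CategoryTheory Opposite CategoryTheory.Limits

universe v u

variable {C : Type u} [Category.{v} C] [HasFiniteLimits C]

/-- An admissible class of monomorphisms on a finitely complete category `C`:
contains identities, closed under composition, and stable under pullback. -/
structure AdmissibleClass (C : Type u) [Category.{v} C] [HasFiniteLimits C] where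
  cls : ∀ ⦃Y X : C⦄, (Y ⟶ X) → Prop
  mono : ∀ ⦃Y X : C⦄ (f : Y ⟶ X), cls f → Mono f
  id_mem : ∀ X : C, cls (𝟙 X)
  comp_mem : ∀ ⦃Z Y X : C⦄ (g : Z ⟶ Y) (f : Y ⟶ X), cls g → cls f → cls (g ≫ f)
  pullback_stable : ∀ ⦃A B X : C⦄ (f : A ⟶ X) (m : B ⟶ X), cls m →
    cls (pullback.fst f m)

/-- The diagonal `f × g = f ∘ f⁻¹(g)` of the pullback of `f` and `g` over `X`,
i.e. the product of `f` and `g` in the slice over `X`. -/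
noncomputable def dprod {A B X : C} (f : A ⟶ X) (g : B ⟶ X) : pullback f g ⟶ X :=
  pullback.fst f g ≫ f

/-- The action of an arrow `m : A ⟶ X` on sieves: `S·m = { h | m × h ∈ S }`. -/
noncomputable def sieveAct {X A : C} (S : Sieve X) (m : A ⟶ X) : Sieve X where
  arrows := fun _Y h => S (pullback.fst m h ≫ m)
  downward_closed := by
    intro Y Z h hh g
    have hl : pullback.lift (pullback.fst m (g ≫ h)) (pullback.snd m (g ≫ h) ≫ g)
        (by rw [pullback.condition]; simp) ≫ pullback.fst m h
        = pullback.fst m (g ≫ h) := pullback.lift_fst _ _ _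
    show S (pullback.fst m (g ≫ h) ≫ m)
    rw [← hl, Category.assoc]
    exact S.downward_closed hh _

lemma CategoryTheory.Sieve.arrows_iff_of_factors {𝒞 : Type*} [Category 𝒞] {X P Q : 𝒞}
    (S : Sieve X) {a : P ⟶ X} {b : Q ⟶ X}
    (φ : P ⟶ Q) (ψ : Q ⟶ P) (hφ : φ ≫ b = a) (hψ : ψ ≫ a = b) : S a ↔ S b :=
  ⟨fun ha => hψ ▸ S.downward_closed ha ψ, fun hb => hφ ▸ S.downward_closed hb φ⟩

section SieveAct

variable {X A B : C}

lemma sieveAct_apply (S : Sieve X) (m : A ⟶ X) {Z : C} (h : Z ⟶ X) :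
    sieveAct S m h ↔ S (pullback.fst m h ≫ m) :=
  Iff.rfl

lemma sieveAct_top (m : A ⟶ X) : sieveAct ⊤ m = ⊤ := by
  ext Z h
  simp [sieveAct_apply]

lemma sieveAct_inf (S T : Sieve X) (m : A ⟶ X) :
    sieveAct (S ⊓ T) m = sieveAct S m ⊓ sieveAct T m := by
  ext Z h
  simp [sieveAct_apply]

lemma sieveAct_sieveAct_le (S : Sieve X) (m : A ⟶ X) (n : B ⟶ X) :
    sieveAct (sieveAct S n) m ≤ sieveAct (sieveAct S m) n := by
  intro Z h hS
  rw [sieveAct_apply, sieveAct_apply] at hS ⊢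
  let toMH : pullback m (pullback.fst n h ≫ n) ⟶ pullback m h :=
    pullback.lift (pullback.fst _ _) (pullback.snd _ _ ≫ pullback.snd n h)
      (by rw [Category.assoc, ← pullback.condition]; exact pullback.condition)
  let swap : pullback m (pullback.fst n h ≫ n) ⟶ pullback n (pullback.fst m h ≫ m) :=
    pullback.lift (pullback.snd _ _ ≫ pullback.fst n h) toMH
      (by rw [Category.assoc, ← pullback.condition, pullback.lift_fst_assoc])
  have hswap : swap ≫ pullback.fst n _ ≫ n = pullback.fst m _ ≫ m := by
    rw [pullback.lift_fst_assoc, Category.assoc, ← pullback.condition]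
  rw [← hswap]
  exact S.downward_closed hS swap

lemma sieveAct_comm (S : Sieve X) (m : A ⟶ X) (n : B ⟶ X) :
    sieveAct (sieveAct S m) n = sieveAct (sieveAct S n) m :=
  le_antisymm (sieveAct_sieveAct_le S n m) (sieveAct_sieveAct_le S m n)

lemma sieveAct_sieveAct_self (S : Sieve X) (m : A ⟶ X) :
    sieveAct (sieveAct S m) m = sieveAct S m := by
  ext Z h
  rw [sieveAct_apply, sieveAct_apply, sieveAct_apply]
  exact S.arrows_iff_of_factors (pullback.snd m (pullback.fst m h ≫ m))
    (pullback.lift (pullback.fst m h) (𝟙 _) (Category.id_comp _).symm)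
    pullback.condition.symm (pullback.lift_fst_assoc _ _ _ _)

end SieveAct

/-- given a family `f_X : D X ⟶ X` satisfying the compatibility
condition `{h | f_X × h ∈ g*(S)} = {h | f_Y × (g∘h) ∈ S}` for every `g : X ⟶ Y`,
the map `α_F(S) = S·f_X = { h | f_X × h ∈ S }` is a natural transformation `Ω ⟶ Ω`
preserving the maximal sieve, commuting with binary intersections, and `M`-action
preserving; moreover it is idempotent (hence a Lawvere–Tierney topology) whenever
each `f_X` is idempotent in the slice (`f_X × f_X = f_X`, up to isomorphism over `X`). -/
theorem alphaF_weak_topology (M : AdmissibleClass C)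
    (D : C → C) (f : ∀ X : C, D X ⟶ X)
    (hF : ∀ ⦃X Y : C⦄ (g : X ⟶ Y) (S : Sieve Y) ⦃Z : C⦄ (h : Z ⟶ X),
        S ((pullback.fst (f X) h ≫ f X) ≫ g)
          ↔ S (pullback.fst (f Y) (h ≫ g) ≫ f Y)) :
    -- naturality of `α_F`
    (∀ ⦃X Y : C⦄ (g : X ⟶ Y) (S : Sieve Y),
        sieveAct (Sieve.pullback g S) (f X) = Sieve.pullback g (sieveAct S (f Y))) ∧
    -- preserves the maximal sieve
    (∀ X : C, sieveAct (⊤ : Sieve X) (f X) = ⊤) ∧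
    -- commutes with binary intersections (productive weak topology)
    (∀ (X : C) (S T : Sieve X),
        sieveAct (S ⊓ T) (f X) = sieveAct S (f X) ⊓ sieveAct T (f X)) ∧
    -- `M`-action preserving: `α_F(S·m) = α_F(S)·m`
    (∀ (X A : C) (m : A ⟶ X), M.cls m → ∀ S : Sieve X,
        sieveAct (sieveAct S m) (f X) = sieveAct (sieveAct S (f X)) m) ∧
    -- idempotency under slice-idempotency of each `f_X`
    ((∀ X : C, ∃ e : pullback (f X) (f X) ≅ D X,
        e.hom ≫ f X = pullback.fst (f X) (f X) ≫ f X) →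
      ∀ (X : C) (S : Sieve X),
        sieveAct (sieveAct S (f X)) (f X) = sieveAct S (f X)) :=
  ⟨fun _ _ g S => Sieve.ext fun _ h => hF g S h,
    fun X => sieveAct_top (f X),
    fun X S T => sieveAct_inf S T (f X),
    fun X _ m _ S => sieveAct_comm S m (f X),
    fun _ X S => sieveAct_sieveAct_self S (f X)⟩
end
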